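/- There exists a connected graph G with an induced connected subgraph H of finite adhesion, a tendril S in G, a set U ⊆ V(H), and a finite set F of vertices of the dominated torso K of H in G, such that F separates U from the K-projection of S in K, but the set X := (F ∩ V(H)) ∪ ⋃{N_G(D) : D ∈ 𝒟′, v_D ∈ F} does not separate U from S in G. -/

import Mathlib

/-- A ray in `G`: a one-way infinite path. -/
def IsRay {V : Type*} (G : SimpleGraph V) (f : ℕ → V) : Prop :=
  Function.Injective f ∧ ∀ n, G.Adj (f n) (f (n + 1))

/-- `F` separates `U` from `S` in `G`: every path (walk) from a vertex of `U`
to a vertex of `S` meets `F`. -/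
def Separates {V : Type*} (G : SimpleGraph V) (F U S : Set V) : Prop :=
  ∀ u ∈ U, ∀ s ∈ S, ∀ p : G.Walk u s, ∃ x ∈ p.support, x ∈ F

/-- `U` is dispersed in `G`: every ray can be separated from `U` by a finite vertex set. -/
def Dispersed {V : Type*} (G : SimpleGraph V) (U : Set V) : Prop :=
  ∀ f : ℕ → V, IsRay G f → ∃ F : Set V, F.Finite ∧ Separates G F U (Set.range f)

/-- `v` is reachable from `u` by a walk avoiding `H` entirely. -/
def ReachOutside {V : Type*} (G : SimpleGraph V) (H : Set V) (u v : V) : Prop :=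
  ∃ p : G.Walk u v, ∀ x ∈ p.support, x ∉ H

/-- `D` is a connected component of `G − H` (the induced subgraph on `V(G) \ H`). -/
def IsComp {V : Type*} (G : SimpleGraph V) (H D : Set V) : Prop :=
  D.Nonempty ∧ ∀ u ∈ D, ∀ v : V, (v ∈ D ↔ v ∉ H ∧ ReachOutside G H u v)

/-- The neighborhood `N_G(D)`: vertices outside `D` adjacent in `G` to a vertex of `D`. -/
def nbhdOf {V : Type*} (G : SimpleGraph V) (D : Set V) : Set V :=
  {v | v ∉ D ∧ ∃ d ∈ D, G.Adj v d}

/-- `H` has finite adhesion in `G`: every component of `G − H` has finite neighborhood. -/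
def FiniteAdhesion {V : Type*} (G : SimpleGraph V) (H : Set V) : Prop :=
  ∀ D : Set V, IsComp G H D → (nbhdOf G D).Finite

/-- The component of `G − H` containing `u` (for `u ∉ H`). -/
def compOf {V : Type*} (G : SimpleGraph V) (H : Set V) (u : V) : Set V :=
  {v | v ∉ H ∧ ReachOutside G H u v}

/-- `𝒟′`: components of `G − H` whose adhesion set is shared by only finitely
many components. -/
def Dfin {V : Type*} (G : SimpleGraph V) (H : Set V) : Set (Set V) :=
  {D | IsComp G H D ∧ {D' | IsComp G H D' ∧ nbhdOf G D' = nbhdOf G D}.Finite}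

/-- `𝒟″`: components of `G − H` whose adhesion set is shared by infinitely
many components. -/
def Dinf {V : Type*} (G : SimpleGraph V) (H : Set V) : Set (Set V) :=
  {D | IsComp G H D ∧ ¬ {D' | IsComp G H D' ∧ nbhdOf G D' = nbhdOf G D}.Finite}

/-- `η` is an admissible contraction map: each `D ∈ 𝒟″` is contracted onto a vertex
`η D ∈ N_G(D)`, and for every `D ∈ 𝒟″` the map `η` restricted to the components
sharing the adhesion set `N_G(D)` surjects onto `N_G(D)`. -/
def EtaOK {V : Type*} (G : SimpleGraph V) (H : Set V) (η : Set V → V) : Prop :=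
  (∀ D ∈ Dinf G H, η D ∈ nbhdOf G D) ∧
  (∀ D ∈ Dinf G H, ∀ a ∈ nbhdOf G D,
    ∃ D' ∈ Dinf G H, nbhdOf G D' = nbhdOf G D ∧ η D' = a)

open Classical in
/-- The contraction map `ρ` onto the vertex set of the dominated torso:
vertices of `H` are kept, each `D ∈ 𝒟′` is contracted to the new vertex
`Sum.inr D`, and each `D ∈ 𝒟″` is contracted onto `η D ∈ N_G(D)`. -/
noncomputable def rho {V : Type*} (G : SimpleGraph V) (H : Set V) (η : Set V → V) :
    V → V ⊕ Set V := fun u =>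
  if u ∈ H then Sum.inl u
  else if compOf G H u ∈ Dfin G H then Sum.inr (compOf G H u)
  else Sum.inl (η (compOf G H u))

/-- The dominated torso `K` of `H` in `G`: the contraction minor of `G`
witnessed by `ρ`. -/
noncomputable def Torso {V : Type*} (G : SimpleGraph V) (H : Set V) (η : Set V → V) :
    SimpleGraph (V ⊕ Set V) where
  Adj a b := a ≠ b ∧ ∃ u v : V, rho G H η u = a ∧ rho G H η v = b ∧ G.Adj u v
  symm := ⟨by
    rintro a b ⟨hne, u, v, hu, hv, huv⟩
    exact ⟨hne.symm, v, u, hv, hu, huv.symm⟩⟩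
  loopless := ⟨by rintro a ⟨hne, -⟩; exact hne rfl⟩

/-- The vertex set of the dominated torso. -/
def torsoVerts {V : Type*} (G : SimpleGraph V) (H : Set V) : Set (V ⊕ Set V) :=
  Sum.inl '' H ∪ Sum.inr '' Dfin G H

/-- A tendril in `G`: a ray with infinitely many vertices in `H`. -/
def IsTendril {V : Type*} (G : SimpleGraph V) (H : Set V) (f : ℕ → V) : Prop :=
  IsRay G f ∧ {n | f n ∈ H}.Infinite

open Classical in
/-- The `H`-masking of a sequence: vertices outside `H` are replaced by their
component of `G − H`. -/
noncomputable def mask {V : Type*} (G : SimpleGraph V) (H : Set V) : V → V ⊕ Set V :=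
  fun u => if u ∈ H then Sum.inl u else Sum.inr (compOf G H u)

/-- The indices of a ray kept by the `K`-projection: vertices of `H`, and the
first index of each maximal run of a component `D ∈ 𝒟′`. -/
def keepIdx {V : Type*} (G : SimpleGraph V) (H : Set V) (f : ℕ → V) (n : ℕ) : Prop :=
  f n ∈ H ∨
    (f n ∉ H ∧ compOf G H (f n) ∈ Dfin G H ∧
      (n = 0 ∨ mask G H (f (n - 1)) ≠ mask G H (f n)))

/-- The `K`-projection of a tendril: maximal runs of a component `D ∈ 𝒟′` are
replaced by the single vertex `v_D`, and terms in components of `𝒟″` are removed. -/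
noncomputable def rayProj {V : Type*} (G : SimpleGraph V) (H : Set V) (η : Set V → V)
    (f : ℕ → V) : ℕ → V ⊕ Set V :=
  fun m => rho G H η (f (Nat.nth (keepIdx G H f) m))

/-- `D̂′`: components of `𝒟′` whose contracted vertex lies in `F`. -/
def DhatFin {V : Type*} (G : SimpleGraph V) (H : Set V) (F : Set (V ⊕ Set V)) :
    Set (Set V) :=
  {D | D ∈ Dfin G H ∧ Sum.inr D ∈ F}

/-- `D̂″`: components `D ∈ 𝒟″` such that some term of the `H`-masking of the
tendril equals `D` and the next vertex of the tendril lies in `F`. -/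
def DhatInf {V : Type*} (G : SimpleGraph V) (H : Set V) (f : ℕ → V)
    (F : Set (V ⊕ Set V)) : Set (Set V) :=
  {D | D ∈ Dinf G H ∧ ∃ n : ℕ, f n ∉ H ∧ compOf G H (f n) = D ∧ Sum.inl (f (n + 1)) ∈ F}

/-- The `S`-modification `F_S` of a set `F ⊆ V(K)`. -/
def Smod {V : Type*} (G : SimpleGraph V) (H : Set V) (f : ℕ → V)
    (F : Set (V ⊕ Set V)) : Set V :=
  (Sum.inl ⁻¹' F ∩ H) ∪ ⋃ D ∈ DhatFin G H F ∪ DhatInf G H f F, nbhdOf G D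


/-!
The components of `G − H` are the single vertices `z_i`, all attached to `A = {x₁, x₂, x₃}` on
the ray `x₀ x₁ x₂ …`; as infinitely many of them share `A`, none lies in `𝒟′`. The dominated torso
therefore contracts every `z_i` onto a vertex of `A`, so `K` is the ray with `A` made complete, and
there `{x₂, x₃}` separates `x₀` from everything beyond `x₁`. The tendril `x₂ z₁ x₃ x₄ …` meets `z₁`,
which its `K`-projection deletes; but `𝒟′ = ∅` makes `X = {x₂, x₃}`, which the path `x₀ x₁ z₁`
avoids.
-/

section General

variable {V : Type*} {G : SimpleGraph V} {H : Set V}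

theorem separates_of_forall_adj_mem {W : Type*} {K : SimpleGraph W} {A F U S : Set W}
    (hA : ∀ a ∈ A, ∀ b, K.Adj a b → b ∈ A ∪ F) (hU : U ⊆ A) (hS : Disjoint S A) :
    Separates K F U S := by
  suffices h : ∀ {a s : W} (p : K.Walk a s), a ∈ A → (∀ x ∈ p.support, x ∉ F) → s ∈ A by
    intro u hu s hs p
    by_contra! hp
    exact hS.notMem_of_mem_left hs (h p (hU hu) hp)
  intro a s p
  induction p with
  | nil => exact fun ha _ => ha
  | cons hadj q ih =>
    intro ha hp
    rw [SimpleGraph.Walk.support_cons, List.forall_mem_cons] at hp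
    rcases hA _ ha _ hadj with hb | hb
    · exact ih hb hp.2
    · exact absurd hb (hp.2 _ q.start_mem_support)

theorem connected_of_induce_connected (hH : (G.induce H).Connected)
    (hout : ∀ v ∉ H, ∃ h ∈ H, G.Adj v h) : G.Connected := by
  obtain ⟨⟨h₀, hh₀⟩⟩ := hH.nonempty
  have reach_H : ∀ h ∈ H, G.Reachable h₀ h := fun h hh =>
    (hH.preconnected ⟨h₀, hh₀⟩ ⟨h, hh⟩).map (SimpleGraph.Embedding.induce H).toHom
  rw [SimpleGraph.connected_iff_exists_forall_reachable]
  refine ⟨h₀, fun v => ?_⟩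
  by_cases hv : v ∈ H
  · exact reach_H v hv
  · obtain ⟨h, hh, hvh⟩ := hout v hv
    exact (reach_H h hh).trans hvh.symm.reachable

theorem nbhdOf_singleton (u : V) : nbhdOf G {u} = G.neighborSet u := by
  ext v
  simp only [nbhdOf, Set.mem_singleton_iff, exists_eq_left, SimpleGraph.mem_neighborSet]
  exact ⟨fun h => h.2.symm, fun h => ⟨h.ne', h.symm⟩⟩

theorem IsComp.eq_compOf {D : Set V} (hD : IsComp G H D) {u : V} (hu : u ∈ D) :
    D = compOf G H u :=
  Set.ext (hD.2 u hu)

theorem IsComp.notMem {D : Set V} (hD : IsComp G H D) {u : V} (hu : u ∈ D) : u ∉ H :=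
  ((hD.2 u hu u).1 hu).1

-- A walk leaving `u` enters `H` at once, so it avoids `H` only if it is trivial.
theorem compOf_eq_singleton (hc : G.IsVertexCover H) {u : V} (hu : u ∉ H) :
    compOf G H u = {u} := by
  ext v
  constructor
  · rintro ⟨-, p, hp⟩
    cases p with
    | nil => rfl
    | cons hadj q =>
      exact absurd ((hc hadj).resolve_left hu) (hp _ (by simp))
  · rintro rfl
    exact ⟨hu, .nil, by simpa using hu⟩

theorem isComp_iff_of_isVertexCover (hc : G.IsVertexCover H) {D : Set V} :
    IsComp G H D ↔ ∃ u ∉ H, D = {u} := by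
  constructor
  · rintro hD
    obtain ⟨u, hu⟩ := hD.1
    have huH := hD.notMem hu
    exact ⟨u, huH, (hD.eq_compOf hu).trans (compOf_eq_singleton hc huH)⟩
  · rintro ⟨u, hu, rfl⟩
    refine ⟨Set.singleton_nonempty u, ?_⟩
    rintro _ rfl v
    exact (Set.ext_iff.1 (compOf_eq_singleton hc hu) v).symm

theorem rho_of_notMem_Dfin (η : Set V → V) {u : V} (hu : u ∉ H)
    (hfin : compOf G H u ∉ Dfin G H) : rho G H η u = Sum.inl (η (compOf G H u)) := by
  simp [rho, hu, hfin]

end General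

namespace PitzWitness

open SimpleGraph

/-- `Sum.inl j` is `x_j` and `Sum.inr i` is `z_i`. -/
abbrev V : Type := ℕ ⊕ ℕ

def edgeRel : V → V → Prop
  | .inl j, .inl k => k = j + 1
  | .inl j, .inr _ => 1 ≤ j ∧ j ≤ 3
  | .inr _, _ => False

def G : SimpleGraph V := fromRel edgeRel

def H : Set V := Set.range Sum.inl

@[simp] theorem inl_mem_H (j : ℕ) : (Sum.inl j : V) ∈ H := ⟨j, rfl⟩

@[simp] theorem inr_notMem_H (i : ℕ) : (Sum.inr i : V) ∉ H := by simp [H]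

@[simp] theorem adj_inl_inl {j k : ℕ} : G.Adj (.inl j) (.inl k) ↔ k = j + 1 ∨ j = k + 1 := by
  simp only [G, fromRel_adj, edgeRel, ne_eq, Sum.inl.injEq]
  omega

@[simp] theorem adj_inl_inr {j i : ℕ} : G.Adj (.inl j) (.inr i) ↔ 1 ≤ j ∧ j ≤ 3 := by
  simp [G, edgeRel]

@[simp] theorem adj_inr_inl {j i : ℕ} : G.Adj (.inr i) (.inl j) ↔ 1 ≤ j ∧ j ≤ 3 := by
  simp [G, edgeRel]

@[simp] theorem not_adj_inr_inr {i i' : ℕ} : ¬ G.Adj (.inr i) (.inr i') := by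
  simp [G, edgeRel]

theorem isVertexCover_H : G.IsVertexCover H := by
  rintro (j | i) (k | i') h <;> simp_all

theorem neighborSet_inr (i : ℕ) : G.neighborSet (.inr i) = {.inl 1, .inl 2, .inl 3} := by
  ext (j | i') <;> simp
  omega

theorem isComp_iff {D : Set V} : IsComp G H D ↔ ∃ i, D = {.inr i} := by
  rw [isComp_iff_of_isVertexCover isVertexCover_H]
  constructor
  · rintro ⟨(j | i), hu, rfl⟩
    · exact absurd (inl_mem_H j) hu
    · exact ⟨i, rfl⟩
  · rintro ⟨i, rfl⟩
    exact ⟨_, inr_notMem_H i, rfl⟩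

theorem nbhdOf_of_isComp {D : Set V} (hD : IsComp G H D) :
    nbhdOf G D = {.inl 1, .inl 2, .inl 3} := by
  obtain ⟨i, rfl⟩ := isComp_iff.1 hD
  rw [nbhdOf_singleton, neighborSet_inr]

theorem sameAdhesion_infinite {D : Set V} (hD : IsComp G H D) :
    {D' | IsComp G H D' ∧ nbhdOf G D' = nbhdOf G D}.Infinite := by
  refine Set.infinite_of_injective_forall_mem
    (Set.singleton_injective.comp Sum.inr_injective) fun i => ?_
  have hi : IsComp G H {.inr i} := isComp_iff.2 ⟨i, rfl⟩
  exact ⟨hi, (nbhdOf_of_isComp hi).trans (nbhdOf_of_isComp hD).symm⟩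

theorem Dfin_eq_empty : Dfin G H = ∅ :=
  Set.eq_empty_of_forall_notMem fun _ hD => sameAdhesion_infinite hD.1 hD.2

theorem Dinf_iff {D : Set V} : D ∈ Dinf G H ↔ ∃ i, D = {.inr i} :=
  ⟨fun hD => isComp_iff.1 hD.1,
    fun hD => ⟨isComp_iff.2 hD, sameAdhesion_infinite (isComp_iff.2 hD)⟩⟩

-- `z_i` is contracted onto `x_(i % 3 + 1)`, which makes `η` onto `{x₁, x₂, x₃}`.
def level : V → ℕ
  | .inl j => j
  | .inr i => i % 3 + 1

noncomputable def η (D : Set V) : V := .inl (sInf (level '' D))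

theorem η_singleton (v : V) : η {v} = .inl (level v) := by
  simp [η]

theorem rho_eq (v : V) : rho G H η v = .inl (.inl (level v)) := by
  rcases v with j | i
  · simp [rho, level]
  · rw [rho_of_notMem_Dfin η (inr_notMem_H i) (by simp [Dfin_eq_empty]),
      compOf_eq_singleton isVertexCover_H (inr_notMem_H i), η_singleton]

theorem level_le_three_of_adj {u v : V} (h : G.Adj u v) (hu : level u ≤ 1) : level v ≤ 3 := by
  rcases u with j | i <;> rcases v with k | i' <;> simp_all [level] <;> omega

theorem etaOK : EtaOK G H η := by
  constructor
  · intro D hD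
    obtain ⟨i, rfl⟩ := Dinf_iff.1 hD
    rw [nbhdOf_of_isComp hD.1, η_singleton]
    simp only [level, Set.mem_insert_iff, Set.mem_singleton_iff, Sum.inl.injEq]
    omega
  · intro D hD a ha
    rw [nbhdOf_of_isComp hD.1] at ha
    obtain ⟨k, hk, rfl⟩ : ∃ k < 3, a = .inl (k + 1) := by
      rcases ha with rfl | rfl | rfl
      exacts [⟨0, by omega, rfl⟩, ⟨1, by omega, rfl⟩, ⟨2, by omega, rfl⟩]
    have hk' : IsComp G H {.inr k} := isComp_iff.2 ⟨k, rfl⟩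
    refine ⟨{.inr k}, Dinf_iff.2 ⟨k, rfl⟩, ?_, ?_⟩
    · rw [nbhdOf_of_isComp hk', nbhdOf_of_isComp hD.1]
    · rw [η_singleton, level, Nat.mod_eq_of_lt hk]

theorem finiteAdhesion : FiniteAdhesion G H := fun D hD => by
  rw [nbhdOf_of_isComp hD]
  exact Set.toFinite _

theorem induce_connected : (G.induce H).Connected := by
  have hsurj : Function.Surjective (fun j : ℕ => (⟨.inl j, inl_mem_H j⟩ : H)) := by
    rintro ⟨_, j, rfl⟩
    exact ⟨j, rfl⟩
  let f : hasse ℕ →g G.induce H :=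
    ⟨fun j => ⟨.inl j, inl_mem_H j⟩, fun h => by simpa [hasse_adj, eq_comm] using h⟩
  exact (connected_iff _).2 ⟨(hasse_preconnected_of_succ ℕ).map f hsurj, ⟨⟨.inl 0, inl_mem_H 0⟩⟩⟩

theorem connected : G.Connected := by
  refine connected_of_induce_connected induce_connected fun v hv => ?_
  obtain ⟨i, rfl⟩ : ∃ i, v = .inr i := by
    rcases v with j | i
    exacts [absurd (inl_mem_H j) hv, ⟨i, rfl⟩]
  exact ⟨.inl 1, inl_mem_H 1, by simp⟩

def tendril : ℕ → V
  | 0 => .inl 2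
  | 1 => .inr 1
  | n + 2 => .inl (n + 3)

theorem isTendril : IsTendril G H tendril := by
  refine ⟨⟨?_, ?_⟩, ?_⟩
  · intro m n h
    rcases m with _ | _ | m <;> rcases n with _ | _ | n <;> simp_all [tendril]
  · rintro (_ | _ | n) <;> simp [tendril]
  · exact Set.infinite_of_injective_forall_mem (f := (· + 2)) (add_left_injective 2)
      fun n => by simp [tendril]

theorem two_le_level_tendril (n : ℕ) : 2 ≤ level (tendril n) := by
  rcases n with _ | _ | n <;> simp [tendril, level]

def F : Set (V ⊕ Set V) := {.inl (.inl 2), .inl (.inl 3)}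

-- `{x₀, x₁}` is closed in `K` up to `F`: an edge of `G` at level `≤ 1` ends at level `≤ 3`.
theorem torso_separates :
    Separates (Torso G H η) F (Sum.inl '' {.inl 0}) (Set.range (rayProj G H η tendril)) := by
  refine separates_of_forall_adj_mem (A := {a | ∃ j ≤ 1, a = .inl (.inl j)}) ?_ ?_ ?_
  · rintro _ ⟨j, hj, rfl⟩ b ⟨-, u, v, hu, rfl, huv⟩
    rw [rho_eq] at hu ⊢
    obtain rfl : level u = j := by simpa using hu
    have := level_le_three_of_adj huv hj
    by_cases hv : level v ≤ 1
    · exact .inl ⟨_, hv, rfl⟩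
    · right
      simp only [F, Set.mem_insert_iff, Set.mem_singleton_iff, Sum.inl.injEq]
      omega
  · rintro _ ⟨_, rfl, rfl⟩
    exact ⟨0, zero_le_one, rfl⟩
  · rw [Set.disjoint_left]
    rintro _ ⟨m, rfl⟩ ⟨j, hj, hm⟩
    rw [rayProj, rho_eq] at hm
    have := two_le_level_tendril (Nat.nth (keepIdx G H tendril) m)
    simp only [Sum.inl.injEq] at hm
    omega

theorem not_separates :
    ¬ Separates G ((Sum.inl ⁻¹' F ∩ H) ∪ ⋃ D ∈ DhatFin G H F, nbhdOf G D)
      {.inl 0} (Set.range tendril) := by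
  have hDhat : DhatFin G H F = ∅ := by simp [DhatFin, Dfin_eq_empty]
  intro hsep
  have h01 : G.Adj (.inl 0) (.inl 1) := by simp
  have h1z : G.Adj (.inl 1) (.inr 1) := by simp
  obtain ⟨x, hx, hxF⟩ := hsep (.inl 0) rfl (.inr 1) ⟨1, rfl⟩ (.cons h01 (.cons h1z .nil))
  simp only [Walk.support_cons, Walk.support_nil, List.mem_cons, List.not_mem_nil, or_false] at hx
  rcases hx with rfl | rfl | rfl <;> simp_all [F]

end PitzWitness

/-- There exist a connected graph `G`, an induced connected subgraph `H` of finite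
adhesion, a tendril `S`, a set `U ⊆ V(H)` and a finite set `F` of vertices of the
dominated torso `K`, such that `F` separates `U` from the `K`-projection of `S`
in `K`, but `X := (F ∩ V(H)) ∪ ⋃ {N_G(D) : D ∈ 𝒟′, v_D ∈ F}` does not separate
`U` from `S` in `G`. -/
theorem pitz_separator_fails :
    ∃ (V : Type) (G : SimpleGraph V) (H : Set V) (η : Set V → V)
      (f : ℕ → V) (U : Set V) (F : Set (V ⊕ Set V)),
      G.Connected ∧ (G.induce H).Connected ∧ FiniteAdhesion G H ∧ EtaOK G H η ∧
      IsTendril G H f ∧ U ⊆ H ∧ F.Finite ∧ F ⊆ torsoVerts G H ∧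
      Separates (Torso G H η) F (Sum.inl '' U) (Set.range (rayProj G H η f)) ∧
      ¬ Separates G ((Sum.inl ⁻¹' F ∩ H) ∪ ⋃ D ∈ DhatFin G H F, nbhdOf G D)
          U (Set.range f) := by
  open PitzWitness in
  refine ⟨V, G, H, η, tendril, {.inl 0}, F, connected, induce_connected, finiteAdhesion, etaOK,
    isTendril, by simp, (Set.finite_singleton _).insert _, ?_, torso_separates, not_separates⟩
  rintro _ (rfl | rfl) <;> exact .inl ⟨_, inl_mem_H _, rfl⟩
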